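/- arXiv:2104.09464 — 3 statements merged into one kernel-verified Lean document; each statement's English description precedes it below -/
import Mathlib

section
/- If d < l₁ < 2d, l₂ ≥ 2d, and l₁ + l₂ ≤ n − 2d, then depending on the initial state the two-contour system either enters free motion or reaches collapse: the states (l₁+d, 0) and (0, l₂+d) lie on free-motion cycles, from (l₁, d) the system reaches the collapse state (d, d), and from (d, l₂) the system reaches the free-motion state (0, l₂+d). -/
open scoped Classical

namespace TwoContour

/-- A state of the two-contour system: the cells of the front particles
of cluster 1 and cluster 2. -/
abbrev State (n : ℕ) := ZMod n × ZMod n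

/-- Cell `c` is occupied by a cluster of length `l` whose front particle is at cell `α`:
the cluster occupies cells `α, α-1, …, α-(l-1)` (mod `n`). -/
def occ (n : ℕ) (α : ZMod n) (l : ℕ) (c : ZMod n) : Prop :=
  ∃ k : ℕ, k < l ∧ c = α - (k : ZMod n)

/-- Cluster 1 is delayed: its front stands at node 1 (cell 0 of contour 1) while
cluster 2 occupies node 1 (cells `d`, `d+1` of contour 2) or stands at node 1
(competition at node 1 is resolved in favor of cluster 2); or its front stands at
node 2 (cell `d` of contour 1) while cluster 2 occupies node 2 (cells 0, 1 of contour 2). -/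
def blocked1 (n l1 l2 d : ℕ) (s : State n) : Prop :=
  (s.1 = 0 ∧ ((occ n s.2 l2 (d : ZMod n) ∧ occ n s.2 l2 ((d : ZMod n) + 1)) ∨ s.2 = (d : ZMod n)))
  ∨ (s.1 = (d : ZMod n) ∧ occ n s.2 l2 0 ∧ occ n s.2 l2 1)

/-- Cluster 2 is delayed: its front stands at node 2 (cell 0 of contour 2) while
cluster 1 occupies node 2 (cells `d`, `d+1` of contour 1) or stands at node 2
(competition at node 2 is resolved in favor of cluster 1); or its front stands at
node 1 (cell `d` of contour 2) while cluster 1 occupies node 1 (cells 0, 1 of contour 1). -/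
def blocked2 (n l1 l2 d : ℕ) (s : State n) : Prop :=
  (s.2 = 0 ∧ ((occ n s.1 l1 (d : ZMod n) ∧ occ n s.1 l1 ((d : ZMod n) + 1)) ∨ s.1 = (d : ZMod n)))
  ∨ (s.2 = (d : ZMod n) ∧ occ n s.1 l1 0 ∧ occ n s.1 l1 1)

/-- One time step of the deterministic dynamics: each non-delayed cluster advances one cell. -/
noncomputable def step (n l1 l2 d : ℕ) (s : State n) : State n :=
  (if blocked1 n l1 l2 d s then s.1 else s.1 + 1,
   if blocked2 n l1 l2 d s then s.2 else s.2 + 1)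

/-- A state of free motion: from this state on, neither cluster is ever delayed. -/
def FreeState (n l1 l2 d : ℕ) (s : State n) : Prop :=
  ∀ t : ℕ, ¬ blocked1 n l1 l2 d ((step n l1 l2 d)^[t] s) ∧
           ¬ blocked2 n l1 l2 d ((step n l1 l2 d)^[t] s)

/-- A state of collapse: from this state on, no particle of either cluster ever moves. -/
def CollapseState (n l1 l2 d : ℕ) (s : State n) : Prop :=
  ∀ t : ℕ, blocked1 n l1 l2 d ((step n l1 l2 d)^[t] s) ∧
           blocked2 n l1 l2 d ((step n l1 l2 d)^[t] s)

/-- `s` lies on a limit cycle of period `T`. -/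
def Periodic (n l1 l2 d : ℕ) (s : State n) (T : ℕ) : Prop :=
  0 < T ∧ (step n l1 l2 d)^[T] s = s

/-- Number of moves of cluster 1 during the first `T` steps starting from `s`. -/
noncomputable def moves1 (n l1 l2 d : ℕ) (s : State n) (T : ℕ) : ℕ :=
  ((Finset.range T).filter (fun t => ¬ blocked1 n l1 l2 d ((step n l1 l2 d)^[t] s))).card

/-- Number of moves of cluster 2 during the first `T` steps starting from `s`. -/
noncomputable def moves2 (n l1 l2 d : ℕ) (s : State n) (T : ℕ) : ℕ :=
  ((Finset.range T).filter (fun t => ¬ blocked2 n l1 l2 d ((step n l1 l2 d)^[t] s))).card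

/-- An admissible state: the two clusters do not occupy the same node simultaneously. -/
def Admissible (n l1 l2 d : ℕ) (s : State n) : Prop :=
  ¬ (occ n s.1 l1 0 ∧ occ n s.1 l1 1 ∧
     occ n s.2 l2 (d : ZMod n) ∧ occ n s.2 l2 ((d : ZMod n) + 1)) ∧
  ¬ (occ n s.1 l1 (d : ZMod n) ∧ occ n s.1 l1 ((d : ZMod n) + 1) ∧
     occ n s.2 l2 0 ∧ occ n s.2 l2 1)


lemma occ_nat (n a l c : ℕ) : occ n (a : ZMod n) l (c : ZMod n) ↔
    ∃ k, k < l ∧ (c + k) % n = a % n := by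
  unfold occ
  constructor
  · rintro ⟨k, hk, hc⟩
    refine ⟨k, hk, (ZMod.natCast_eq_natCast_iff' _ _ _).1 ?_⟩
    push_cast
    rw [hc]; ring
  · rintro ⟨k, hk, h⟩
    refine ⟨k, hk, ?_⟩
    have := (ZMod.natCast_eq_natCast_iff' (c + k) a n).2 h
    push_cast at this
    linear_combination this

lemma b1_nat (n l1 l2 d u v : ℕ) : blocked1 n l1 l2 d ((u : ZMod n), (v : ZMod n)) ↔
    (u % n = 0 % n ∧ (((∃ k, k < l2 ∧ (d + k) % n = v % n) ∧
        (∃ k, k < l2 ∧ (d + 1 + k) % n = v % n)) ∨ v % n = d % n))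
    ∨ (u % n = d % n ∧ (∃ k, k < l2 ∧ (0 + k) % n = v % n)
        ∧ (∃ k, k < l2 ∧ (1 + k) % n = v % n)) := by
  have e0 : (0 : ZMod n) = ((0 : ℕ) : ZMod n) := by norm_cast
  have e1 : (1 : ZMod n) = ((1 : ℕ) : ZMod n) := by norm_cast
  have ed : (d : ZMod n) + ((1:ℕ) : ZMod n) = ((d + 1 : ℕ) : ZMod n) := by push_cast; ring
  rw [blocked1]
  simp only [e0, e1, ed, occ_nat, ZMod.natCast_eq_natCast_iff']

lemma b2_nat (n l1 l2 d u v : ℕ) : blocked2 n l1 l2 d ((u : ZMod n), (v : ZMod n)) ↔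
    (v % n = 0 % n ∧ (((∃ k, k < l1 ∧ (d + k) % n = u % n) ∧
        (∃ k, k < l1 ∧ (d + 1 + k) % n = u % n)) ∨ u % n = d % n))
    ∨ (v % n = d % n ∧ (∃ k, k < l1 ∧ (0 + k) % n = u % n)
        ∧ (∃ k, k < l1 ∧ (1 + k) % n = u % n)) := by
  have e0 : (0 : ZMod n) = ((0 : ℕ) : ZMod n) := by norm_cast
  have e1 : (1 : ZMod n) = ((1 : ℕ) : ZMod n) := by norm_cast
  have ed : (d : ZMod n) + ((1:ℕ) : ZMod n) = ((d + 1 : ℕ) : ZMod n) := by push_cast; ring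
  rw [blocked2]
  simp only [e0, e1, ed, occ_nat, ZMod.natCast_eq_natCast_iff']

lemma mod2 {n : ℕ} (hn : 0 < n) {x : ℕ} (hx : x < 2 * n) :
    x % n = x ∨ x % n + n = x := by
  rcases Nat.lt_or_ge x n with h | h
  · exact Or.inl (Nat.mod_eq_of_lt h)
  · right
    rw [Nat.mod_eq_sub_mod h, Nat.mod_eq_of_lt (by omega)]
    omega
/-- Bundled hypotheses. -/
def Hyp (n l1 l2 d : ℕ) : Prop :=
  0 < n ∧ 0 < d ∧ 2*d ≤ n ∧ l1 < n ∧ l2 < n ∧ d < l1 ∧ l1 < 2*d ∧ 2*d ≤ l2 ∧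
    l1 + l2 + 2*d ≤ n

lemma UB1 {n l1 l2 d : ℕ} (H : Hyp n l1 l2 d) (u v : ℕ) (hu : u < n) (hv : v < n)
    (huv : (v + (l1 + d)) % n = u) :
    ¬ blocked1 n l1 l2 d ((u : ZMod n), (v : ZMod n)) ∧
    ¬ blocked2 n l1 l2 d ((u : ZMod n), (v : ZMod n)) := by
  obtain ⟨hn, hd, h2d, hl1n, hl2n, h1, h2, h3, h4⟩ := H
  have hum : u % n = u := Nat.mod_eq_of_lt hu
  have hvm : v % n = v := Nat.mod_eq_of_lt hv
  have hdm : d % n = d := Nat.mod_eq_of_lt (by omega)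
  have h0 : (0:ℕ) % n = 0 := Nat.zero_mod n
  have m := mod2 hn (show v + (l1 + d) < 2 * n by omega)
  constructor
  · rw [b1_nat]
    rintro (⟨hA, ⟨⟨k1, hk1, e1⟩, ⟨k2, hk2, e2⟩⟩ | hD⟩ | ⟨hE, ⟨k3, hk3, e3⟩, ⟨k4, hk4, e4⟩⟩)
    · have f1 : (d + k1) % n = d + k1 := Nat.mod_eq_of_lt (by omega)
      omega
    · omega
    · have f3 : (0 + k3) % n = 0 + k3 := Nat.mod_eq_of_lt (by omega)
      omega
  · rw [b2_nat]
    rintro (⟨hA, ⟨⟨k1, hk1, e1⟩, ⟨k2, hk2, e2⟩⟩ | hD⟩ | ⟨hE, ⟨k3, hk3, e3⟩, ⟨k4, hk4, e4⟩⟩)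
    · have f1 : (d + k1) % n = d + k1 := Nat.mod_eq_of_lt (by omega)
      omega
    · omega
    · have f3 : (0 + k3) % n = 0 + k3 := Nat.mod_eq_of_lt (by omega)
      omega

lemma UB2 {n l1 l2 d : ℕ} (H : Hyp n l1 l2 d) (u v : ℕ) (hu : u < n) (hv : v < n)
    (huv : (u + (l2 + d)) % n = v) :
    ¬ blocked1 n l1 l2 d ((u : ZMod n), (v : ZMod n)) ∧
    ¬ blocked2 n l1 l2 d ((u : ZMod n), (v : ZMod n)) := by
  obtain ⟨hn, hd, h2d, hl1n, hl2n, h1, h2, h3, h4⟩ := H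
  have hum : u % n = u := Nat.mod_eq_of_lt hu
  have hvm : v % n = v := Nat.mod_eq_of_lt hv
  have hdm : d % n = d := Nat.mod_eq_of_lt (by omega)
  have h0 : (0:ℕ) % n = 0 := Nat.zero_mod n
  have m := mod2 hn (show u + (l2 + d) < 2 * n by omega)
  constructor
  · rw [b1_nat]
    rintro (⟨hA, ⟨⟨k1, hk1, e1⟩, ⟨k2, hk2, e2⟩⟩ | hD⟩ | ⟨hE, ⟨k3, hk3, e3⟩, ⟨k4, hk4, e4⟩⟩)
    · have f1 : (d + k1) % n = d + k1 := Nat.mod_eq_of_lt (by omega)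
      omega
    · omega
    · have f3 : (0 + k3) % n = 0 + k3 := Nat.mod_eq_of_lt (by omega)
      omega
  · rw [b2_nat]
    rintro (⟨hA, ⟨⟨k1, hk1, e1⟩, ⟨k2, hk2, e2⟩⟩ | hD⟩ | ⟨hE, ⟨k3, hk3, e3⟩, ⟨k4, hk4, e4⟩⟩)
    · have f1 : (d + k1) % n = d + k1 := Nat.mod_eq_of_lt (by omega)
      omega
    · omega
    · have f3 : (0 + k3) % n = 0 + k3 := Nat.mod_eq_of_lt (by omega)
      omega

lemma UBA {n l1 l2 d : ℕ} (H : Hyp n l1 l2 d) (u v : ℕ) (hu : u < n) (hv : v < n)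
    (hrel : (v + l1) % n = (u + d) % n) (hud : u ≠ d) :
    ¬ blocked1 n l1 l2 d ((u : ZMod n), (v : ZMod n)) ∧
    ¬ blocked2 n l1 l2 d ((u : ZMod n), (v : ZMod n)) := by
  obtain ⟨hn, hd, h2d, hl1n, hl2n, h1, h2, h3, h4⟩ := H
  have hum : u % n = u := Nat.mod_eq_of_lt hu
  have hvm : v % n = v := Nat.mod_eq_of_lt hv
  have hdm : d % n = d := Nat.mod_eq_of_lt (by omega)
  have h0 : (0:ℕ) % n = 0 := Nat.zero_mod n
  have m1 := mod2 hn (show v + l1 < 2 * n by omega)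
  have m2 := mod2 hn (show u + d < 2 * n by omega)
  constructor
  · rw [b1_nat]
    rintro (⟨hA, ⟨⟨k1, hk1, e1⟩, ⟨k2, hk2, e2⟩⟩ | hD⟩ | ⟨hE, ⟨k3, hk3, e3⟩, ⟨k4, hk4, e4⟩⟩)
    · have f1 : (d + k1) % n = d + k1 := Nat.mod_eq_of_lt (by omega)
      omega
    · omega
    · omega
  · rw [b2_nat]
    rintro (⟨hA, ⟨⟨k1, hk1, e1⟩, ⟨k2, hk2, e2⟩⟩ | hD⟩ | ⟨hE, ⟨k3, hk3, e3⟩, ⟨k4, hk4, e4⟩⟩)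
    · have f1 : (d + k1) % n = d + k1 := Nat.mod_eq_of_lt (by omega)
      omega
    · omega
    · have f3 : (0 + k3) % n = 0 + k3 := Nat.mod_eq_of_lt (by omega)
      omega

lemma UBC {n l1 l2 d : ℕ} (H : Hyp n l1 l2 d) (u v : ℕ) (hu : u < n) (hv : v < n)
    (hrel : (u + l2) % n = (v + d) % n) (hu0 : u ≠ 0) :
    ¬ blocked1 n l1 l2 d ((u : ZMod n), (v : ZMod n)) ∧
    ¬ blocked2 n l1 l2 d ((u : ZMod n), (v : ZMod n)) := by
  obtain ⟨hn, hd, h2d, hl1n, hl2n, h1, h2, h3, h4⟩ := H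
  have hum : u % n = u := Nat.mod_eq_of_lt hu
  have hvm : v % n = v := Nat.mod_eq_of_lt hv
  have hdm : d % n = d := Nat.mod_eq_of_lt (by omega)
  have h0 : (0:ℕ) % n = 0 := Nat.zero_mod n
  have m1 := mod2 hn (show u + l2 < 2 * n by omega)
  have m2 := mod2 hn (show v + d < 2 * n by omega)
  constructor
  · rw [b1_nat]
    rintro (⟨hA, ⟨⟨k1, hk1, e1⟩, ⟨k2, hk2, e2⟩⟩ | hD⟩ | ⟨hE, ⟨k3, hk3, e3⟩, ⟨k4, hk4, e4⟩⟩)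
    · omega
    · omega
    · have f3 : (0 + k3) % n = 0 + k3 := Nat.mod_eq_of_lt (by omega)
      omega
  · rw [b2_nat]
    rintro (⟨hA, ⟨⟨k1, hk1, e1⟩, ⟨k2, hk2, e2⟩⟩ | hD⟩ | ⟨hE, ⟨k3, hk3, e3⟩, ⟨k4, hk4, e4⟩⟩)
    · have f1 : (d + k1) % n = d + k1 := Nat.mod_eq_of_lt (by omega)
      omega
    · omega
    · have f3 : (0 + k3) % n = 0 + k3 := Nat.mod_eq_of_lt (by omega)
      omega

lemma UBB {n l1 l2 d : ℕ} (H : Hyp n l1 l2 d) (v : ℕ) (hv : v < n)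
    (hv1 : 2*d ≤ v + l1) (hv2 : v < d) :
    blocked1 n l1 l2 d ((d : ZMod n), (v : ZMod n)) ∧
    ¬ blocked2 n l1 l2 d ((d : ZMod n), (v : ZMod n)) := by
  obtain ⟨hn, hd, h2d, hl1n, hl2n, h1, h2, h3, h4⟩ := H
  have hvm : v % n = v := Nat.mod_eq_of_lt hv
  have hdm : d % n = d := Nat.mod_eq_of_lt (by omega)
  have h0 : (0:ℕ) % n = 0 := Nat.zero_mod n
  constructor
  · rw [b1_nat]
    refine Or.inr ⟨rfl, ⟨v, by omega, ?_⟩, ⟨v - 1, by omega, ?_⟩⟩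
    · rw [Nat.mod_eq_of_lt (by omega)]; omega
    · rw [Nat.mod_eq_of_lt (by omega)]; omega
  · rw [b2_nat]
    rintro (⟨hA, -⟩ | ⟨hE, -⟩) <;> omega

lemma UBD {n l1 l2 d : ℕ} (H : Hyp n l1 l2 d) (v : ℕ) (hv : v < n)
    (hv1 : l2 ≤ v + d) (hv2 : v < l2 + d) :
    blocked1 n l1 l2 d (((0:ℕ) : ZMod n), (v : ZMod n)) ∧
    ¬ blocked2 n l1 l2 d (((0:ℕ) : ZMod n), (v : ZMod n)) := by
  obtain ⟨hn, hd, h2d, hl1n, hl2n, h1, h2, h3, h4⟩ := H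
  have hvm : v % n = v := Nat.mod_eq_of_lt hv
  have hdm : d % n = d := Nat.mod_eq_of_lt (by omega)
  have h0 : (0:ℕ) % n = 0 := Nat.zero_mod n
  constructor
  · rw [b1_nat]
    rcases eq_or_ne v d with hvd | hvd
    · exact Or.inl ⟨rfl, Or.inr (by omega)⟩
    · have hvgt : d < v := by omega
      refine Or.inl ⟨rfl, Or.inl ⟨⟨v - d, by omega, ?_⟩, ⟨v - d - 1, by omega, ?_⟩⟩⟩
      · rw [Nat.mod_eq_of_lt (by omega)]; omega
      · rw [Nat.mod_eq_of_lt (by omega)]; omega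
  · rw [b2_nat]
    rintro (⟨hA, -⟩ | ⟨hE, -, ⟨k4, hk4, e4⟩⟩)
    · omega
    · have f4 : (1 + k4) % n = 1 + k4 := Nat.mod_eq_of_lt (by omega)
      omega

lemma COL {n l1 l2 d : ℕ} (H : Hyp n l1 l2 d) :
    blocked1 n l1 l2 d ((d : ZMod n), (d : ZMod n)) ∧
    blocked2 n l1 l2 d ((d : ZMod n), (d : ZMod n)) := by
  obtain ⟨hn, hd, h2d, hl1n, hl2n, h1, h2, h3, h4⟩ := H
  have hdm : d % n = d := Nat.mod_eq_of_lt (by omega)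
  constructor
  · rw [b1_nat]
    refine Or.inr ⟨rfl, ⟨d, by omega, ?_⟩, ⟨d - 1, by omega, ?_⟩⟩
    · rw [Nat.mod_eq_of_lt (by omega)]; omega
    · rw [Nat.mod_eq_of_lt (by omega)]; omega
  · rw [b2_nat]
    refine Or.inr ⟨rfl, ⟨d, by omega, ?_⟩, ⟨d - 1, by omega, ?_⟩⟩
    · rw [Nat.mod_eq_of_lt (by omega)]; omega
    · rw [Nat.mod_eq_of_lt (by omega)]; omega
lemma step_free {n l1 l2 d : ℕ} {s : State n} (h1 : ¬ blocked1 n l1 l2 d s)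
    (h2 : ¬ blocked2 n l1 l2 d s) : step n l1 l2 d s = (s.1 + 1, s.2 + 1) := by
  simp only [step, if_neg h1, if_neg h2]

lemma step_half {n l1 l2 d : ℕ} {s : State n} (h1 : blocked1 n l1 l2 d s)
    (h2 : ¬ blocked2 n l1 l2 d s) : step n l1 l2 d s = (s.1, s.2 + 1) := by
  simp only [step, if_pos h1, if_neg h2]

lemma step_stay {n l1 l2 d : ℕ} {s : State n} (h1 : blocked1 n l1 l2 d s)
    (h2 : blocked2 n l1 l2 d s) : step n l1 l2 d s = s := by
  simp only [step, if_pos h1, if_pos h2]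

lemma UB1' {n l1 l2 d : ℕ} (H : Hyp n l1 l2 d) (a b : ℕ)
    (hab : (b + (l1 + d)) % n = a % n) :
    ¬ blocked1 n l1 l2 d ((a : ZMod n), (b : ZMod n)) ∧
    ¬ blocked2 n l1 l2 d ((a : ZMod n), (b : ZMod n)) := by
  have hn : 0 < n := H.1
  rw [← ZMod.natCast_mod a n, ← ZMod.natCast_mod b n]
  exact UB1 H (a % n) (b % n) (Nat.mod_lt _ hn) (Nat.mod_lt _ hn)
    (((Nat.mod_modEq b n).add_right (l1 + d)).trans hab)

lemma UB2' {n l1 l2 d : ℕ} (H : Hyp n l1 l2 d) (a b : ℕ)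
    (hab : (a + (l2 + d)) % n = b % n) :
    ¬ blocked1 n l1 l2 d ((a : ZMod n), (b : ZMod n)) ∧
    ¬ blocked2 n l1 l2 d ((a : ZMod n), (b : ZMod n)) := by
  have hn : 0 < n := H.1
  rw [← ZMod.natCast_mod a n, ← ZMod.natCast_mod b n]
  exact UB2 H (a % n) (b % n) (Nat.mod_lt _ hn) (Nat.mod_lt _ hn)
    (((Nat.mod_modEq a n).add_right (l2 + d)).trans hab)

lemma UBA' {n l1 l2 d : ℕ} (H : Hyp n l1 l2 d) (a b : ℕ)
    (hab : (b + l1) % n = (a + d) % n) (hud : a % n ≠ d) :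
    ¬ blocked1 n l1 l2 d ((a : ZMod n), (b : ZMod n)) ∧
    ¬ blocked2 n l1 l2 d ((a : ZMod n), (b : ZMod n)) := by
  have hn : 0 < n := H.1
  rw [← ZMod.natCast_mod a n, ← ZMod.natCast_mod b n]
  exact UBA H (a % n) (b % n) (Nat.mod_lt _ hn) (Nat.mod_lt _ hn)
    ((((Nat.mod_modEq b n).add_right l1).trans hab).trans
      ((Nat.mod_modEq a n).add_right d).symm) hud

lemma UBC' {n l1 l2 d : ℕ} (H : Hyp n l1 l2 d) (a b : ℕ)
    (hab : (a + l2) % n = (b + d) % n) (hu0 : a % n ≠ 0) :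
    ¬ blocked1 n l1 l2 d ((a : ZMod n), (b : ZMod n)) ∧
    ¬ blocked2 n l1 l2 d ((a : ZMod n), (b : ZMod n)) := by
  have hn : 0 < n := H.1
  rw [← ZMod.natCast_mod a n, ← ZMod.natCast_mod b n]
  exact UBC H (a % n) (b % n) (Nat.mod_lt _ hn) (Nat.mod_lt _ hn)
    ((((Nat.mod_modEq a n).add_right l2).trans hab).trans
      ((Nat.mod_modEq b n).add_right d).symm) hu0

lemma UBB' {n l1 l2 d : ℕ} (H : Hyp n l1 l2 d) (a b : ℕ) (ha : a = n + d)
    (hb1 : n ≤ b) (hb2 : b < n + d) (hb3 : 2*d + n ≤ b + l1) :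
    blocked1 n l1 l2 d ((a : ZMod n), (b : ZMod n)) ∧
    ¬ blocked2 n l1 l2 d ((a : ZMod n), (b : ZMod n)) := by
  obtain ⟨hn, hd, h2d, hl1n, hl2n, h1, h2, h3, h4⟩ := id H
  have ea : ((a : ℕ) : ZMod n) = ((d : ℕ) : ZMod n) := by
    subst ha; push_cast; simp [ZMod.natCast_self]
  have eb : ((b : ℕ) : ZMod n) = (((b - n : ℕ)) : ZMod n) := by
    rw [show ((b : ℕ) : ZMod n) = ((b - n + n : ℕ) : ZMod n) from by congr 1; omega]
    push_cast [ZMod.natCast_self]; ring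
  rw [ea, eb]
  exact UBB H (b - n) (by omega) (by omega) (by omega)

lemma UBD' {n l1 l2 d : ℕ} (H : Hyp n l1 l2 d) (a b : ℕ) (ha : a = n)
    (hb1 : n + l2 ≤ b + d) (hb2 : b < n + l2 + d) (hb3 : n ≤ b) :
    blocked1 n l1 l2 d ((a : ZMod n), (b : ZMod n)) ∧
    ¬ blocked2 n l1 l2 d ((a : ZMod n), (b : ZMod n)) := by
  obtain ⟨hn, hd, h2d, hl1n, hl2n, h1, h2, h3, h4⟩ := id H
  have ea : ((a : ℕ) : ZMod n) = (((0:ℕ)) : ZMod n) := by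
    subst ha; simp [ZMod.natCast_self]
  have eb : ((b : ℕ) : ZMod n) = (((b - n : ℕ)) : ZMod n) := by
    rw [show ((b : ℕ) : ZMod n) = ((b - n + n : ℕ) : ZMod n) from by congr 1; omega]
    push_cast [ZMod.natCast_self]; ring
  rw [ea, eb]
  exact UBD H (b - n) (by omega) (by omega) (by omega)

lemma orbit1 {n l1 l2 d : ℕ} (H : Hyp n l1 l2 d) :
    ∀ t, (step n l1 l2 d)^[t] (((l1 + d : ℕ) : ZMod n), (0 : ZMod n))
      = (((l1 + d + t : ℕ) : ZMod n), ((t : ℕ) : ZMod n)) := by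
  intro t
  induction t with
  | zero => simp
  | succ t ih =>
    rw [Function.iterate_succ_apply', ih]
    obtain ⟨nb1, nb2⟩ := UB1' H (l1 + d + t) t (by congr 1; omega)
    rw [step_free nb1 nb2]
    simp only [Prod.mk.injEq]
    constructor <;> (push_cast; ring)

lemma orbit2 {n l1 l2 d : ℕ} (H : Hyp n l1 l2 d) :
    ∀ t, (step n l1 l2 d)^[t] ((0 : ZMod n), ((l2 + d : ℕ) : ZMod n))
      = (((t : ℕ) : ZMod n), ((l2 + d + t : ℕ) : ZMod n)) := by
  intro t
  induction t with
  | zero => simp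
  | succ t ih =>
    rw [Function.iterate_succ_apply', ih]
    obtain ⟨nb1, nb2⟩ := UB2' H t (l2 + d + t) (by congr 1; omega)
    rw [step_free nb1 nb2]
    simp only [Prod.mk.injEq]
    constructor <;> (push_cast; ring)

lemma orbit3A {n l1 l2 d : ℕ} (H : Hyp n l1 l2 d) :
    ∀ t, t ≤ n + d - l1 → (step n l1 l2 d)^[t] (((l1 : ℕ) : ZMod n), ((d : ℕ) : ZMod n))
      = (((l1 + t : ℕ) : ZMod n), ((d + t : ℕ) : ZMod n)) := by
  obtain ⟨hn, hd, h2d, hl1n, hl2n, h1, h2, h3, h4⟩ := id H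
  intro t
  induction t with
  | zero => simp
  | succ t ih =>
    intro ht
    rw [Function.iterate_succ_apply', ih (by omega)]
    have hside : (l1 + t) % n ≠ d := by
      have m := mod2 hn (show l1 + t < 2 * n by omega)
      omega
    obtain ⟨nb1, nb2⟩ := UBA' H (l1 + t) (d + t) (by congr 1; omega) hside
    rw [step_free nb1 nb2]
    simp only [Prod.mk.injEq]
    constructor <;> (push_cast; ring)

lemma orbit3B {n l1 l2 d : ℕ} (H : Hyp n l1 l2 d) :
    ∀ j, j ≤ l1 - d → (step n l1 l2 d)^[j]
        (((l1 + (n + d - l1) : ℕ) : ZMod n), ((d + (n + d - l1) : ℕ) : ZMod n))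
      = (((l1 + (n + d - l1) : ℕ) : ZMod n), ((d + (n + d - l1) + j : ℕ) : ZMod n)) := by
  obtain ⟨hn, hd, h2d, hl1n, hl2n, h1, h2, h3, h4⟩ := id H
  intro j
  induction j with
  | zero => simp
  | succ j ih =>
    intro hj
    rw [Function.iterate_succ_apply', ih (by omega)]
    obtain ⟨b1, nb2⟩ := UBB' H (l1 + (n + d - l1)) (d + (n + d - l1) + j)
      (by omega) (by omega) (by omega) (by omega)
    rw [step_half b1 nb2]
    simp only [Prod.mk.injEq]
    refine ⟨by trivial, ?_⟩
    push_cast; ring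

lemma orbit4A {n l1 l2 d : ℕ} (H : Hyp n l1 l2 d) :
    ∀ t, t ≤ n - d → (step n l1 l2 d)^[t] (((d : ℕ) : ZMod n), ((l2 : ℕ) : ZMod n))
      = (((d + t : ℕ) : ZMod n), ((l2 + t : ℕ) : ZMod n)) := by
  obtain ⟨hn, hd, h2d, hl1n, hl2n, h1, h2, h3, h4⟩ := id H
  intro t
  induction t with
  | zero => simp
  | succ t ih =>
    intro ht
    rw [Function.iterate_succ_apply', ih (by omega)]
    have hside : (d + t) % n ≠ 0 := by
      have m : (d + t) % n = d + t := Nat.mod_eq_of_lt (by omega)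
      omega
    obtain ⟨nb1, nb2⟩ := UBC' H (d + t) (l2 + t) (by congr 1; omega) hside
    rw [step_free nb1 nb2]
    simp only [Prod.mk.injEq]
    constructor <;> (push_cast; ring)

lemma orbit4B {n l1 l2 d : ℕ} (H : Hyp n l1 l2 d) :
    ∀ j, j ≤ 2*d → (step n l1 l2 d)^[j]
        (((d + (n - d) : ℕ) : ZMod n), ((l2 + (n - d) : ℕ) : ZMod n))
      = (((d + (n - d) : ℕ) : ZMod n), ((l2 + (n - d) + j : ℕ) : ZMod n)) := by
  obtain ⟨hn, hd, h2d, hl1n, hl2n, h1, h2, h3, h4⟩ := id H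
  intro j
  induction j with
  | zero => simp
  | succ j ih =>
    intro hj
    rw [Function.iterate_succ_apply', ih (by omega)]
    obtain ⟨b1, nb2⟩ := UBD' H (d + (n - d)) (l2 + (n - d) + j)
      (by omega) (by omega) (by omega) (by omega)
    rw [step_half b1 nb2]
    simp only [Prod.mk.injEq]
    refine ⟨by trivial, ?_⟩
    push_cast; ring

theorem stmt14 (n l1 l2 d : ℕ) (hn : 0 < n) (hd : 0 < d) (h2d : 2 * d ≤ n)
    (hl1pos : 0 < l1) (hl1n : l1 < n) (hl2pos : 0 < l2) (hl2n : l2 < n) (h12 : l1 ≤ l2)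
    (h1 : d < l1) (h2 : l1 < 2 * d) (h3 : 2 * d ≤ l2) (h4 : l1 + l2 ≤ n - 2 * d) :
    FreeState n l1 l2 d (((l1 + d : ℕ) : ZMod n), (0 : ZMod n)) ∧
    FreeState n l1 l2 d ((0 : ZMod n), ((l2 + d : ℕ) : ZMod n)) ∧
    (∃ t : ℕ, (step n l1 l2 d)^[t] (((l1 : ℕ) : ZMod n), ((d : ℕ) : ZMod n)) =
        (((d : ℕ) : ZMod n), ((d : ℕ) : ZMod n))) ∧
    CollapseState n l1 l2 d (((d : ℕ) : ZMod n), ((d : ℕ) : ZMod n)) ∧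
    (∃ t : ℕ, (step n l1 l2 d)^[t] (((d : ℕ) : ZMod n), ((l2 : ℕ) : ZMod n)) =
        ((0 : ZMod n), ((l2 + d : ℕ) : ZMod n))) := by
  have H : Hyp n l1 l2 d := ⟨hn, hd, h2d, hl1n, hl2n, h1, h2, h3, by omega⟩
  obtain ⟨hn', hd', h2d', hl1n', hl2n', h1', h2', h3', h4'⟩ := id H
  refine ⟨?_, ?_, ?_, ?_, ?_⟩
  · intro t
    rw [orbit1 H t]
    exact UB1' H (l1 + d + t) t (by congr 1; omega)
  · intro t
    rw [orbit2 H t]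
    exact UB2' H t (l2 + d + t) (by congr 1; omega)
  · refine ⟨n, ?_⟩
    have key : (step n l1 l2 d)^[n] (((l1:ℕ):ZMod n), ((d:ℕ):ZMod n))
        = (step n l1 l2 d)^[l1 - d]
            ((step n l1 l2 d)^[n + d - l1] (((l1:ℕ):ZMod n), ((d:ℕ):ZMod n))) := by
      rw [← Function.iterate_add_apply]
      congr 1
      omega
    rw [key, orbit3A H (n + d - l1) le_rfl, orbit3B H (l1 - d) le_rfl]
    simp only [Prod.mk.injEq]
    constructor
    · rw [show l1 + (n + d - l1) = d + n from by omega]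
      push_cast [ZMod.natCast_self]; ring
    · rw [show d + (n + d - l1) + (l1 - d) = d + n from by omega]
      push_cast [ZMod.natCast_self]; ring
  · intro t
    have hc := COL H
    rw [Function.iterate_fixed (step_stay hc.1 hc.2) t]
    exact hc
  · refine ⟨n + d, ?_⟩
    have key : (step n l1 l2 d)^[n + d] (((d:ℕ):ZMod n), ((l2:ℕ):ZMod n))
        = (step n l1 l2 d)^[2*d]
            ((step n l1 l2 d)^[n - d] (((d:ℕ):ZMod n), ((l2:ℕ):ZMod n))) := by
      rw [← Function.iterate_add_apply]
      congr 1
      omega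
    rw [key, orbit4A H (n - d) le_rfl, orbit4B H (2*d) le_rfl]
    simp only [Prod.mk.injEq]
    constructor
    · rw [show d + (n - d) = n from by omega]
      simp [ZMod.natCast_self]
    · rw [show l2 + (n - d) + 2*d = l2 + d + n from by omega]
      push_cast [ZMod.natCast_self]; ring

end TwoContour
end

section
/- If l₁ > n − d and l₂ > n − d, then the two-contour system reaches a state of collapse from every admissible initial state. -/
open scoped Classical

namespace TwoContour

/-! ### Auxiliary development -/

/-- Bundled hypotheses. -/
structure Hyp_s18 (n l1 l2 d : ℕ) : Prop where
  hd : 2 ≤ d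
  hdn : 2 * d ≤ n
  h1n : l1 < n
  h2n : l2 < n
  h1 : n - d < l1
  h2 : n - d < l2
  h12 : l1 ≤ l2

/-- Nat-level blocking condition for cluster 1. -/
def nb1 (n l2 d x y : ℕ) : Prop :=
  (x = 0 ∧ (y + (n - d)) % n < l2) ∨ (x = d ∧ 1 ≤ y ∧ y < l2)

/-- Nat-level blocking condition for cluster 2. -/
def nb2 (n l1 d x y : ℕ) : Prop :=
  (y = 0 ∧ (x + (n - d)) % n < l1) ∨ (y = d ∧ 1 ≤ x ∧ x < l1)

/-- Nat-level dynamics. -/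
noncomputable def nstep (n l1 l2 d : ℕ) (p : ℕ × ℕ) : ℕ × ℕ :=
  (if nb1 n l2 d p.1 p.2 then p.1 else (p.1 + 1) % n,
   if nb2 n l1 d p.1 p.2 then p.2 else (p.2 + 1) % n)

/-- Nat-level reachability of a doubly blocked state. -/
def nreach (n l1 l2 d : ℕ) (p : ℕ × ℕ) : Prop :=
  ∃ t : ℕ, nb1 n l2 d ((nstep n l1 l2 d)^[t] p).1 ((nstep n l1 l2 d)^[t] p).2 ∧
           nb2 n l1 d ((nstep n l1 l2 d)^[t] p).1 ((nstep n l1 l2 d)^[t] p).2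

lemma nreach_step {n l1 l2 d : ℕ} {p : ℕ × ℕ} (h : nreach n l1 l2 d (nstep n l1 l2 d p)) :
    nreach n l1 l2 d p := by
  obtain ⟨t, h⟩ := h
  exact ⟨t + 1, by rwa [Function.iterate_succ_apply]⟩

lemma occ_iff {n : ℕ} (hn : 0 < n) (l : ℕ) (α c : ZMod n) :
    occ n α l c ↔ (α - c).val < l := by
  haveI : NeZero n := ⟨hn.ne'⟩
  constructor
  · rintro ⟨k, hk, rfl⟩
    have h : α - (α - (k : ZMod n)) = (k : ZMod n) := by ring
    rw [h, ZMod.val_natCast]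
    exact lt_of_le_of_lt (Nat.mod_le k n) hk
  · intro h
    refine ⟨(α - c).val, h, ?_⟩
    rw [ZMod.natCast_val, ZMod.cast_id]
    ring

lemma cast_inj' {n x z : ℕ} (hx : x < n) (hz : z < n) :
    ((x : ZMod n) = (z : ZMod n)) ↔ x = z := by
  constructor
  · intro h
    have := congrArg ZMod.val h
    rwa [ZMod.val_cast_of_lt hx, ZMod.val_cast_of_lt hz] at this
  · rintro rfl; rfl

lemma val_sub_cast {n y e : ℕ} (hn : 0 < n) (he : e ≤ n) :
    ((y : ZMod n) - (e : ZMod n)).val = (y + (n - e)) % n := by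
  haveI : NeZero n := ⟨hn.ne'⟩
  have h1 : ((y : ZMod n) - (e : ZMod n)) = ((y + (n - e) : ℕ) : ZMod n) := by
    have h2 : ((n - e : ℕ) : ZMod n) = - (e : ZMod n) := by
      have : ((n - e : ℕ) : ZMod n) + ((e : ℕ) : ZMod n) = ((n : ℕ) : ZMod n) := by
        rw [← Nat.cast_add, Nat.sub_add_cancel he]
      rw [ZMod.natCast_self] at this
      linear_combination this
    rw [Nat.cast_add, h2]
    ring
  rw [h1, ZMod.val_natCast]

lemma blocked1_iff {n l1 l2 d : ℕ} (H : Hyp_s18 n l1 l2 d) {x y : ℕ} (hx : x < n) (hy : y < n) :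
    blocked1 n l1 l2 d ((x : ZMod n), (y : ZMod n)) ↔ nb1 n l2 d x y := by
  obtain ⟨hd, hdn, h1n, h2n, h1, h2, h12⟩ := H
  have hn : 0 < n := by omega
  have e0 : ((x : ZMod n) = 0) ↔ x = 0 := by
    rw [show (0 : ZMod n) = ((0 : ℕ) : ZMod n) by norm_num]
    exact cast_inj' hx (by omega)
  have ed : ((x : ZMod n) = (d : ZMod n)) ↔ x = d := cast_inj' hx (by omega)
  have ed2 : ((y : ZMod n) = (d : ZMod n)) ↔ y = d := cast_inj' hy (by omega)
  have o1 : occ n (y : ZMod n) l2 (d : ZMod n) ↔ (y + (n - d)) % n < l2 := by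
    rw [occ_iff hn, val_sub_cast hn (by omega)]
  have o2 : occ n (y : ZMod n) l2 ((d : ZMod n) + 1) ↔ (y + (n - (d + 1))) % n < l2 := by
    rw [occ_iff hn, show ((d : ZMod n) + 1) = ((d + 1 : ℕ) : ZMod n) by push_cast; ring,
      val_sub_cast hn (by omega)]
  have o3 : occ n (y : ZMod n) l2 0 ↔ y < l2 := by
    rw [occ_iff hn, sub_zero, ZMod.val_cast_of_lt hy]
  have o4 : occ n (y : ZMod n) l2 1 ↔ (y + (n - 1)) % n < l2 := by
    rw [occ_iff hn, show (1 : ZMod n) = ((1 : ℕ) : ZMod n) by norm_num,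
      val_sub_cast hn (by omega)]
  show ((x : ZMod n) = 0 ∧ _) ∨ ((x : ZMod n) = (d : ZMod n) ∧ _) ↔ _
  rw [e0, ed, ed2, o1, o2, o3, o4]
  unfold nb1
  have m1 : (y + (n - d)) % n = if y < d then y + (n - d) else y - d := by
    split_ifs with h
    · exact Nat.mod_eq_of_lt (by omega)
    · rw [Nat.mod_eq_sub_mod (by omega), Nat.mod_eq_of_lt (by omega)]
      omega
  have m2 : (y + (n - (d + 1))) % n = if y < d + 1 then y + (n - (d + 1)) else y - (d + 1) := by
    split_ifs with h
    · exact Nat.mod_eq_of_lt (by omega)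
    · rw [Nat.mod_eq_sub_mod (by omega), Nat.mod_eq_of_lt (by omega)]
      omega
  have m3 : (y + (n - 1)) % n = if y < 1 then y + (n - 1) else y - 1 := by
    split_ifs with h
    · exact Nat.mod_eq_of_lt (by omega)
    · rw [Nat.mod_eq_sub_mod (by omega), Nat.mod_eq_of_lt (by omega)]
      omega
  rw [m1, m2, m3]
  split_ifs <;> omega

lemma blocked2_iff {n l1 l2 d : ℕ} (H : Hyp_s18 n l1 l2 d) {x y : ℕ} (hx : x < n) (hy : y < n) :
    blocked2 n l1 l2 d ((x : ZMod n), (y : ZMod n)) ↔ nb2 n l1 d x y := by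
  obtain ⟨hd, hdn, h1n, h2n, h1, h2, h12⟩ := H
  have hn : 0 < n := by omega
  have e0 : ((y : ZMod n) = 0) ↔ y = 0 := by
    rw [show (0 : ZMod n) = ((0 : ℕ) : ZMod n) by norm_num]
    exact cast_inj' hy (by omega)
  have ed : ((y : ZMod n) = (d : ZMod n)) ↔ y = d := cast_inj' hy (by omega)
  have ed2 : ((x : ZMod n) = (d : ZMod n)) ↔ x = d := cast_inj' hx (by omega)
  have o1 : occ n (x : ZMod n) l1 (d : ZMod n) ↔ (x + (n - d)) % n < l1 := by
    rw [occ_iff hn, val_sub_cast hn (by omega)]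
  have o2 : occ n (x : ZMod n) l1 ((d : ZMod n) + 1) ↔ (x + (n - (d + 1))) % n < l1 := by
    rw [occ_iff hn, show ((d : ZMod n) + 1) = ((d + 1 : ℕ) : ZMod n) by push_cast; ring,
      val_sub_cast hn (by omega)]
  have o3 : occ n (x : ZMod n) l1 0 ↔ x < l1 := by
    rw [occ_iff hn, sub_zero, ZMod.val_cast_of_lt hx]
  have o4 : occ n (x : ZMod n) l1 1 ↔ (x + (n - 1)) % n < l1 := by
    rw [occ_iff hn, show (1 : ZMod n) = ((1 : ℕ) : ZMod n) by norm_num,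
      val_sub_cast hn (by omega)]
  show ((y : ZMod n) = 0 ∧ _) ∨ ((y : ZMod n) = (d : ZMod n) ∧ _) ↔ _
  rw [e0, ed, ed2, o1, o2, o3, o4]
  unfold nb2
  have m1 : (x + (n - d)) % n = if x < d then x + (n - d) else x - d := by
    split_ifs with h
    · exact Nat.mod_eq_of_lt (by omega)
    · rw [Nat.mod_eq_sub_mod (by omega), Nat.mod_eq_of_lt (by omega)]
      omega
  have m2 : (x + (n - (d + 1))) % n = if x < d + 1 then x + (n - (d + 1)) else x - (d + 1) := by
    split_ifs with h
    · exact Nat.mod_eq_of_lt (by omega)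
    · rw [Nat.mod_eq_sub_mod (by omega), Nat.mod_eq_of_lt (by omega)]
      omega
  have m3 : (x + (n - 1)) % n = if x < 1 then x + (n - 1) else x - 1 := by
    split_ifs with h
    · exact Nat.mod_eq_of_lt (by omega)
    · rw [Nat.mod_eq_sub_mod (by omega), Nat.mod_eq_of_lt (by omega)]
      omega
  rw [m1, m2, m3]
  split_ifs <;> omega

lemma step_coe {n l1 l2 d : ℕ} (H : Hyp_s18 n l1 l2 d) {x y : ℕ} (hx : x < n) (hy : y < n) :
    step n l1 l2 d ((x : ZMod n), (y : ZMod n)) =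
      (((nstep n l1 l2 d (x, y)).1 : ZMod n), ((nstep n l1 l2 d (x, y)).2 : ZMod n)) := by
  have hb1 := blocked1_iff H hx hy
  have hb2 := blocked2_iff H hx hy
  unfold step nstep
  have c1 : (((x + 1) % n : ℕ) : ZMod n) = (x : ZMod n) + 1 := by
    rw [ZMod.natCast_mod]; push_cast; ring
  have c2 : (((y + 1) % n : ℕ) : ZMod n) = (y : ZMod n) + 1 := by
    rw [ZMod.natCast_mod]; push_cast; ring
  by_cases H1 : nb1 n l2 d x y <;> by_cases H2 : nb2 n l1 d x y <;>
    simp only [hb1, hb2, H1, H2, if_true, if_false, c1, c2, if_pos, if_neg, not_false_iff] <;>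
    simp [H1, H2, c1, c2]

lemma iter_coe {n l1 l2 d : ℕ} (H : Hyp_s18 n l1 l2 d) :
    ∀ (t x y : ℕ), x < n → y < n →
      (step n l1 l2 d)^[t] ((x : ZMod n), (y : ZMod n)) =
        ((((nstep n l1 l2 d)^[t] (x, y)).1 : ZMod n), (((nstep n l1 l2 d)^[t] (x, y)).2 : ZMod n))
      ∧ ((nstep n l1 l2 d)^[t] (x, y)).1 < n ∧ ((nstep n l1 l2 d)^[t] (x, y)).2 < n := by
  have hn : 0 < n := by have := H.hdn; have := H.hd; omega
  intro t
  induction t with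
  | zero => intro x y hx hy; exact ⟨rfl, hx, hy⟩
  | succ t ih =>
    intro x y hx hy
    have hx' : (nstep n l1 l2 d (x, y)).1 < n := by
      unfold nstep; dsimp only; split_ifs
      · exact hx
      · exact Nat.mod_lt _ hn
    have hy' : (nstep n l1 l2 d (x, y)).2 < n := by
      unfold nstep; dsimp only; split_ifs
      · exact hy
      · exact Nat.mod_lt _ hn
    have := ih (nstep n l1 l2 d (x, y)).1 (nstep n l1 l2 d (x, y)).2 hx' hy'
    rw [Function.iterate_succ_apply, Function.iterate_succ_apply, step_coe H hx hy]
    simpa using this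

lemma nstep_eq (n l1 l2 d a b : ℕ) :
    nstep n l1 l2 d (a, b) =
      (if nb1 n l2 d a b then a else (a + 1) % n,
       if nb2 n l1 d a b then b else (b + 1) % n) := rfl

lemma bb_00 {n l1 l2 d : ℕ} (H : Hyp_s18 n l1 l2 d) : nb1 n l2 d 0 0 ∧ nb2 n l1 d 0 0 := by
  obtain ⟨hd, hdn, h1n, h2n, h1, h2, h12⟩ := H
  constructor
  · left; exact ⟨rfl, by rw [Nat.mod_eq_of_lt (by omega)]; omega⟩
  · left; exact ⟨rfl, by rw [Nat.mod_eq_of_lt (by omega)]; omega⟩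

lemma bb_dd {n l1 l2 d : ℕ} (H : Hyp_s18 n l1 l2 d) : nb1 n l2 d d d ∧ nb2 n l1 d d d := by
  obtain ⟨hd, hdn, h1n, h2n, h1, h2, h12⟩ := H
  exact ⟨Or.inr ⟨rfl, by omega, by omega⟩, Or.inr ⟨rfl, by omega, by omega⟩⟩

lemma T2a {n l1 l2 d : ℕ} (H : Hyp_s18 n l1 l2 d) {x : ℕ} (hx1 : l1 + d ≤ n + x) (hx2 : x < d) :
    ∀ t, t ≤ d - x → (nstep n l1 l2 d)^[t] (x, 0) = (x + t, t) := by
  obtain ⟨hd, hdn, h1n, h2n, h1, h2, h12⟩ := H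
  intro t
  induction t with
  | zero => simp
  | succ t ih =>
    intro ht
    rw [Function.iterate_succ_apply', ih (by omega), nstep_eq]
    have hb1 : ¬ nb1 n l2 d (x + t) t := by
      rintro (⟨h, _⟩ | ⟨h, _, _⟩) <;> omega
    have hb2 : ¬ nb2 n l1 d (x + t) t := by
      rintro (⟨h0, hm⟩ | ⟨h, _, _⟩)
      · rw [h0, Nat.add_zero] at *
        rw [Nat.mod_eq_of_lt (by omega)] at hm
        omega
      · omega
    rw [if_neg hb1, if_neg hb2, Nat.mod_eq_of_lt (by omega), Nat.mod_eq_of_lt (by omega)]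
    rw [Prod.mk.injEq]
    omega

lemma T2b {n l1 l2 d : ℕ} (H : Hyp_s18 n l1 l2 d) {x : ℕ} (hx1 : l1 + d ≤ n + x) (hx2 : x < d) :
    ∀ t, t ≤ x → (nstep n l1 l2 d)^[t] (d, d - x) = (d, d - x + t) := by
  obtain ⟨hd, hdn, h1n, h2n, h1, h2, h12⟩ := H
  intro t
  induction t with
  | zero => simp
  | succ t ih =>
    intro ht
    rw [Function.iterate_succ_apply', ih (by omega), nstep_eq]
    have hb1 : nb1 n l2 d d (d - x + t) := Or.inr ⟨rfl, by omega, by omega⟩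
    have hb2 : ¬ nb2 n l1 d d (d - x + t) := by
      rintro (⟨h, _⟩ | ⟨h, _, _⟩) <;> omega
    rw [if_pos hb1, if_neg hb2, Nat.mod_eq_of_lt (by omega)]
    rw [Prod.mk.injEq]
    omega

lemma T2 {n l1 l2 d : ℕ} (H : Hyp_s18 n l1 l2 d) {x : ℕ} (hx1 : l1 + d ≤ n + x) (hx2 : x < d) :
    (nstep n l1 l2 d)^[d] (x, 0) = (d, d) := by
  have key : (nstep n l1 l2 d)^[x + (d - x)] (x, 0) = (d, d) := by
    rw [Function.iterate_add_apply, T2a H hx1 hx2 (d - x) le_rfl]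
    have e1 : (x + (d - x), d - x) = ((d : ℕ), d - x) := by
      rw [Prod.mk.injEq]; omega
    rw [e1, T2b H hx1 hx2 x le_rfl, Prod.mk.injEq]
    omega
  have e2 : x + (d - x) = d := by omega
  rwa [e2] at key

lemma reach_y0 {n l1 l2 d : ℕ} (H : Hyp_s18 n l1 l2 d) :
    ∀ m x, x < n → n - x ≤ m → nreach n l1 l2 d (x, 0) := by
  obtain ⟨hd, hdn, h1n, h2n, h1, h2, h12⟩ := H
  have H' : Hyp_s18 n l1 l2 d := ⟨hd, hdn, h1n, h2n, h1, h2, h12⟩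
  intro m
  induction m with
  | zero => intro x hx hm; omega
  | succ m ih =>
    intro x hx hm
    by_cases hx0 : x = 0
    · subst hx0; exact ⟨0, bb_00 H'⟩
    by_cases hw : l1 + d ≤ n + x ∧ x < d
    · refine ⟨d, ?_⟩
      rw [T2 H' hw.1 hw.2]
      exact bb_dd H'
    · have hb2 : nb2 n l1 d x 0 := by
        left
        refine ⟨rfl, ?_⟩
        by_cases hxd : x < d
        · rw [Nat.mod_eq_of_lt (by omega)]; omega
        · rw [Nat.mod_eq_sub_mod (by omega), Nat.mod_eq_of_lt (by omega)]; omega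
      have hb1 : ¬ nb1 n l2 d x 0 := by
        rintro (⟨h, _⟩ | ⟨_, h, _⟩) <;> omega
      have hstep : nstep n l1 l2 d (x, 0) = ((x + 1) % n, 0) := by
        rw [nstep_eq, if_neg hb1, if_pos hb2]
      apply nreach_step
      rw [hstep]
      by_cases hlast : x + 1 = n
      · rw [hlast, Nat.mod_self]
        exact ⟨0, bb_00 H'⟩
      · rw [Nat.mod_eq_of_lt (by omega)]
        exact ih (x + 1) (by omega) (by omega)

/-- Measure for the main induction. -/
noncomputable def meas (n l1 d x y : ℕ) : ℕ :=
  if y = d ∧ nb2 n l1 d x y then (n - d) * n + (l1 - x) else (n - y) * n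

lemma reach_all {n l1 l2 d : ℕ} (H : Hyp_s18 n l1 l2 d) :
    ∀ m x y, x < n → y < n → meas n l1 d x y ≤ m → nreach n l1 l2 d (x, y) := by
  obtain ⟨hd, hdn, h1n, h2n, h1, h2, h12⟩ := H
  have H' : Hyp_s18 n l1 l2 d := ⟨hd, hdn, h1n, h2n, h1, h2, h12⟩
  intro m
  induction m with
  | zero =>
    intro x y hx hy hm
    exfalso
    unfold meas at hm
    split_ifs at hm
    · have := Nat.mul_pos (show 0 < n - d by omega) (show 0 < n by omega)
      omega
    · have := Nat.mul_pos (show 0 < n - y by omega) (show 0 < n by omega)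
      omega
  | succ m ih =>
    intro x y hx hy hm
    by_cases hy0 : y = 0
    · subst hy0; exact reach_y0 H' (n - x) x hx le_rfl
    by_cases hp : y = d ∧ nb2 n l1 d x y
    · -- pause at node: y = d, cluster 2 blocked
      obtain ⟨hyd, hb2⟩ := hp
      have hxr : 1 ≤ x ∧ x < l1 := by
        rcases hb2 with ⟨h, _⟩ | ⟨_, h, h'⟩
        · omega
        · exact ⟨h, h'⟩
      by_cases hxd : x = d
      · refine ⟨0, ?_⟩
        simp only [Function.iterate_zero, id_eq]
        exact ⟨Or.inr ⟨hxd, by omega, by omega⟩, hb2⟩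
      have hb1 : ¬ nb1 n l2 d x y := by
        rintro (⟨h, _⟩ | ⟨h, _, _⟩) <;> omega
      have hstep : nstep n l1 l2 d (x, y) = ((x + 1) % n, y) := by
        rw [nstep_eq, if_neg hb1, if_pos hb2]
      have hx1n : x + 1 < n := by omega
      apply nreach_step
      rw [hstep, Nat.mod_eq_of_lt hx1n]
      refine ih (x + 1) y hx1n hy ?_
      have hold : meas n l1 d x y = (n - d) * n + (l1 - x) := by
        unfold meas
        rw [if_pos ⟨hyd, hb2⟩]
      have hnew : meas n l1 d (x + 1) y ≤ (n - d) * n + (l1 - (x + 1)) := by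
        unfold meas
        split_ifs
        · omega
        · rw [show n - y = n - d by omega]
          omega
      omega
    · -- cluster 2 moves
      have hb2 : ¬ nb2 n l1 d x y := by
        intro hb
        rcases hb with ⟨h, _⟩ | ⟨h, hb', hb''⟩
        · omega
        · exact hp ⟨h, Or.inr ⟨h, hb', hb''⟩⟩
      set x' := if nb1 n l2 d x y then x else (x + 1) % n with hx'def
      have hx' : x' < n := by
        rw [hx'def]; split_ifs
        · exact hx
        · exact Nat.mod_lt _ (by omega)
      have hstep : nstep n l1 l2 d (x, y) = (x', (y + 1) % n) := by
        rw [nstep_eq, ← hx'def, if_neg hb2]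
      apply nreach_step
      rw [hstep]
      by_cases hlast : y + 1 = n
      · rw [hlast, Nat.mod_self]
        exact reach_y0 H' (n - x') x' hx' le_rfl
      · rw [Nat.mod_eq_of_lt (by omega)]
        refine ih x' (y + 1) hx' (by omega) ?_
        have hold : meas n l1 d x y = (n - y) * n := by
          unfold meas
          rw [if_neg hp]
        have hnew : meas n l1 d x' (y + 1) < (n - y) * n := by
          unfold meas
          split_ifs with hcond
          · obtain ⟨hyd, _⟩ := hcond
            rw [show n - y = (n - d) + 1 by omega, Nat.add_mul, Nat.one_mul]
            omega
          · rw [show n - y = (n - (y + 1)) + 1 by omega, Nat.add_mul, Nat.one_mul]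
            have := Nat.mul_pos (show 0 < n - (y + 1) by omega) (show 0 < n by omega)
            omega
        omega

theorem stmt18 (n l1 l2 d : ℕ) (hn : 0 < n) (hd : 0 < d) (h2d : 2 * d ≤ n)
    (hl1pos : 0 < l1) (hl1n : l1 < n) (hl2pos : 0 < l2) (hl2n : l2 < n) (h12 : l1 ≤ l2)
    (h1 : n - d < l1) (h2 : n - d < l2) :
    ∀ s : State n, Admissible n l1 l2 d s →
      ∃ t0 : ℕ, CollapseState n l1 l2 d ((step n l1 l2 d)^[t0] s) := by
  intro s _hadm
  haveI : NeZero n := ⟨hn.ne'⟩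
  have hd2 : 2 ≤ d := by omega
  have H : Hyp_s18 n l1 l2 d := ⟨hd2, h2d, hl1n, hl2n, h1, h2, h12⟩
  obtain ⟨x, y, hx, hy, hs⟩ : ∃ x y : ℕ, x < n ∧ y < n ∧ s = ((x : ZMod n), (y : ZMod n)) := by
    refine ⟨s.1.val, s.2.val, ZMod.val_lt _, ZMod.val_lt _, ?_⟩
    rw [ZMod.natCast_val, ZMod.natCast_val, ZMod.cast_id, ZMod.cast_id]
  obtain ⟨t, hb1, hb2⟩ := reach_all H (meas n l1 d x y) x y hx hy le_rfl
  obtain ⟨heq, hx', hy'⟩ := iter_coe H t x y hx hy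
  refine ⟨t, ?_⟩
  have hB1 : blocked1 n l1 l2 d ((step n l1 l2 d)^[t] s) := by
    rw [hs, heq]; exact (blocked1_iff H hx' hy').2 hb1
  have hB2 : blocked2 n l1 l2 d ((step n l1 l2 d)^[t] s) := by
    rw [hs, heq]; exact (blocked2_iff H hx' hy').2 hb2
  have hfix : step n l1 l2 d ((step n l1 l2 d)^[t] s) = (step n l1 l2 d)^[t] s := by
    have hrfl : step n l1 l2 d ((step n l1 l2 d)^[t] s) =
        (if blocked1 n l1 l2 d ((step n l1 l2 d)^[t] s) then ((step n l1 l2 d)^[t] s).1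
          else ((step n l1 l2 d)^[t] s).1 + 1,
         if blocked2 n l1 l2 d ((step n l1 l2 d)^[t] s) then ((step n l1 l2 d)^[t] s).2
          else ((step n l1 l2 d)^[t] s).2 + 1) := rfl
    rw [hrfl, if_pos hB1, if_pos hB2]
  intro t'
  rw [Function.iterate_fixed hfix t']
  exact ⟨hB1, hB2⟩

end TwoContour
end

section
/- If the two clusters have equal length l₁ = l₂ = l with l ≤ d and 2l ≤ n − 2d, then every trajectory of the two-contour system starting from any of the four states (l+d, 0), (0, l+d), (l, d), (d, l) is periodic with period n and both clusters move at every step (free motion). -/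
open scoped Classical

namespace TwoContour

lemma key {n : ℕ} (hn : 0 < n) (u v : ℕ) (huv : u < v) (hvn : v < u + n)
    (h : ((u : ℕ) : ZMod n) = ((v : ℕ) : ZMod n)) : False := by
  haveI : NeZero n := ⟨by omega⟩
  have h0 : (((v - u : ℕ)) : ZMod n) = 0 := by
    rw [Nat.cast_sub huv.le, ← h, sub_self]
  have hdv := (ZMod.natCast_eq_zero_iff _ n).mp h0
  have := Nat.le_of_dvd (by omega) hdv
  omega

lemma swapB {n l d : ℕ} (x y : ZMod n) :
    blocked1 n l l d (x, y) ↔ blocked2 n l l d (y, x) := Iff.rfl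

section main
variable {n l d : ℕ} (hn : 0 < n) (hd : 0 < d) (h2d : 2 * d ≤ n)
    (hlpos : 0 < l) (hln : l < n) (h1 : l ≤ d) (h2 : 2 * l ≤ n - 2 * d)

include hn hd h2d hlpos hln h1 h2

lemma notB1_pd (a : ZMod n) :
    ¬ blocked1 n l l d (a, a - ((l + d : ℕ) : ZMod n)) := by
  rintro (⟨ha, ⟨⟨k, hk, heq⟩, -⟩ | hy⟩ | ⟨ha, ⟨k, hk, heq⟩, -⟩) <;> dsimp only at *
  · rw [ha] at heq
    exact key hn 0 (2 * d + l + k) (by omega) (by omega)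
      (by push_cast at heq ⊢; linear_combination -heq)
  · rw [ha] at hy
    exact key hn 0 (l + 2 * d) (by omega) (by omega)
      (by push_cast at hy ⊢; linear_combination hy)
  · rw [ha] at heq
    exact key hn 0 (l + k) (by omega) (by omega)
      (by push_cast at heq ⊢; linear_combination -heq)

lemma notB2_pd (a : ZMod n) :
    ¬ blocked2 n l l d (a, a - ((l + d : ℕ) : ZMod n)) := by
  rintro (⟨hy, ⟨⟨k, hk, heq⟩, -⟩ | ha⟩ | ⟨hy, ⟨k, hk, heq⟩, -⟩) <;> dsimp only at *
  · have ha : a = ((l + d : ℕ) : ZMod n) := by linear_combination hy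
    rw [ha] at heq
    exact key hn (d + k) (l + d) (by omega) (by omega)
      (by push_cast at heq ⊢; linear_combination heq)
  · rw [ha] at hy
    exact key hn 0 l (by omega) (by omega)
      (by push_cast at hy ⊢; linear_combination hy)
  · have ha : a = ((l + d : ℕ) : ZMod n) + d := by linear_combination hy
    rw [ha] at heq
    exact key hn k (l + 2 * d) (by omega) (by omega)
      (by push_cast at heq ⊢; linear_combination heq)

lemma notB1_md (a : ZMod n) :
    ¬ blocked1 n l l d (a, a - (((l : ℕ) : ZMod n) - ((d : ℕ) : ZMod n))) := by
  rintro (⟨ha, ⟨⟨k, hk, heq⟩, -⟩ | hy⟩ | ⟨ha, ⟨k, hk, heq⟩, -⟩) <;> dsimp only at *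
  · rw [ha] at heq
    exact key hn 0 (l + k) (by omega) (by omega)
      (by push_cast at heq ⊢; linear_combination -heq)
  · rw [ha] at hy
    exact key hn 0 l (by omega) (by omega)
      (by push_cast at hy ⊢; linear_combination hy)
  · rw [ha] at heq
    exact key hn (l + k) (2 * d) (by omega) (by omega)
      (by push_cast at heq ⊢; linear_combination heq)

lemma notB2_md (a : ZMod n) :
    ¬ blocked2 n l l d (a, a - (((l : ℕ) : ZMod n) - ((d : ℕ) : ZMod n))) := by
  rintro (⟨hy, ⟨⟨k, hk, heq⟩, -⟩ | ha⟩ | ⟨hy, ⟨k, hk, heq⟩, -⟩) <;> dsimp only at *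
  · have ha : a = ((l : ℕ) : ZMod n) - d := by linear_combination hy
    rw [ha] at heq
    exact key hn l (2 * d + k) (by omega) (by omega)
      (by push_cast at heq ⊢; linear_combination -heq)
  · rw [ha] at hy
    exact key hn l (2 * d) (by omega) (by omega)
      (by push_cast at hy ⊢; linear_combination -hy)
  · have ha : a = ((l : ℕ) : ZMod n) := by linear_combination hy
    rw [ha] at heq
    exact key hn k l (by omega) (by omega)
      (by push_cast at heq ⊢; linear_combination heq)

omit hn hd h2d hlpos hln h1 h2

lemma notB_neg (δ : ZMod n)
    (h : ∀ a : ZMod n, ¬ blocked1 n l l d (a, a - δ) ∧ ¬ blocked2 n l l d (a, a - δ))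
    (a : ZMod n) :
    ¬ blocked1 n l l d (a, a - (-δ)) ∧ ¬ blocked2 n l l d (a, a - (-δ)) := by
  have e1 : a - (-δ) = a + δ := by ring
  have e2 : a = (a + δ) - δ := by ring
  constructor
  · rw [e1, swapB]
    have := (h (a + δ)).2
    rwa [← e2] at this
  · rw [e1]
    intro hb
    rw [← swapB] at hb
    have := (h (a + δ)).1
    rw [← e2] at this
    exact this hb

lemma orbit (δ : ZMod n)
    (h : ∀ a : ZMod n, ¬ blocked1 n l l d (a, a - δ) ∧ ¬ blocked2 n l l d (a, a - δ))
    (a : ZMod n) (t : ℕ) :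
    (step n l l d)^[t] (a, a - δ) = (a + t, a + t - δ) := by
  induction t with
  | zero => simp
  | succ t ih =>
      rw [Function.iterate_succ_apply', ih, step,
        if_neg (h (a + t)).1, if_neg (h (a + t)).2]
      refine Prod.ext ?_ ?_ <;> simp <;> push_cast <;> ring

lemma full (δ : ZMod n)
    (h : ∀ a : ZMod n, ¬ blocked1 n l l d (a, a - δ) ∧ ¬ blocked2 n l l d (a, a - δ))
    (a : ZMod n) :
    (step n l l d)^[n] (a, a - δ) = (a, a - δ) ∧ FreeState n l l d (a, a - δ) := by
  constructor
  · rw [orbit δ h a n, ZMod.natCast_self, add_zero]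
  · intro t
    rw [orbit δ h a t]
    exact h (a + t)

end main

theorem stmt19 (n l d : ℕ) (hn : 0 < n) (hd : 0 < d) (h2d : 2 * d ≤ n)
    (hlpos : 0 < l) (hln : l < n)
    (h1 : l ≤ d) (h2 : 2 * l ≤ n - 2 * d) :
    ((step n l l d)^[n] (((l + d : ℕ) : ZMod n), (0 : ZMod n)) =
        (((l + d : ℕ) : ZMod n), (0 : ZMod n)) ∧
      FreeState n l l d (((l + d : ℕ) : ZMod n), (0 : ZMod n))) ∧
    ((step n l l d)^[n] ((0 : ZMod n), ((l + d : ℕ) : ZMod n)) =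
        ((0 : ZMod n), ((l + d : ℕ) : ZMod n)) ∧
      FreeState n l l d ((0 : ZMod n), ((l + d : ℕ) : ZMod n))) ∧
    ((step n l l d)^[n] (((l : ℕ) : ZMod n), ((d : ℕ) : ZMod n)) =
        (((l : ℕ) : ZMod n), ((d : ℕ) : ZMod n)) ∧
      FreeState n l l d (((l : ℕ) : ZMod n), ((d : ℕ) : ZMod n))) ∧
    ((step n l l d)^[n] (((d : ℕ) : ZMod n), ((l : ℕ) : ZMod n)) =
        (((d : ℕ) : ZMod n), ((l : ℕ) : ZMod n)) ∧
      FreeState n l l d (((d : ℕ) : ZMod n), ((l : ℕ) : ZMod n))) := by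
  have hpd : ∀ a : ZMod n, ¬ blocked1 n l l d (a, a - ((l + d : ℕ) : ZMod n)) ∧
      ¬ blocked2 n l l d (a, a - ((l + d : ℕ) : ZMod n)) :=
    fun a => ⟨notB1_pd hn hd h2d hlpos hln h1 h2 a, notB2_pd hn hd h2d hlpos hln h1 h2 a⟩
  have hmd : ∀ a : ZMod n,
      ¬ blocked1 n l l d (a, a - (((l : ℕ) : ZMod n) - ((d : ℕ) : ZMod n))) ∧
      ¬ blocked2 n l l d (a, a - (((l : ℕ) : ZMod n) - ((d : ℕ) : ZMod n))) :=
    fun a => ⟨notB1_md hn hd h2d hlpos hln h1 h2 a, notB2_md hn hd h2d hlpos hln h1 h2 a⟩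
  refine ⟨?_, ?_, ?_, ?_⟩
  · have h := full (((l + d : ℕ) : ZMod n)) hpd (((l + d : ℕ) : ZMod n))
    rwa [sub_self] at h
  · have h := full (-((l + d : ℕ) : ZMod n)) (notB_neg _ hpd) 0
    rw [show (0 : ZMod n) - -(((l + d : ℕ) : ZMod n)) = ((l + d : ℕ) : ZMod n) by ring] at h
    exact h
  · have h := full (((l : ℕ) : ZMod n) - ((d : ℕ) : ZMod n)) hmd ((l : ℕ) : ZMod n)
    rw [show ((l : ℕ) : ZMod n) - (((l : ℕ) : ZMod n) - ((d : ℕ) : ZMod n))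
        = ((d : ℕ) : ZMod n) by ring] at h
    exact h
  · have h := full (-(((l : ℕ) : ZMod n) - ((d : ℕ) : ZMod n))) (notB_neg _ hmd)
      ((d : ℕ) : ZMod n)
    rw [show ((d : ℕ) : ZMod n) - -(((l : ℕ) : ZMod n) - ((d : ℕ) : ZMod n))
        = ((l : ℕ) : ZMod n) by ring] at h
    exact h

end TwoContour
end
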